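/- arXiv:2310.19783 — 2 statements merged into one kernel-verified Lean document; each statement's English description precedes it below -/
import Mathlib

section
/- Let X₁ and X₂ be subspaces of H with orthogonal projections P₁ and P₂, set T = P₂ ∘ P₁, and assume X₁ ∩ X₂ ≠ H. Define s* = sup{‖T v‖ : v ∈ (X₁ ∩ X₂)ᗮ, ‖v‖ = 1}, and let λ* = max{|λ| : λ is an eigenvalue of T with λ ≠ 1} (this set of eigenvalues is nonempty under the hypothesis). Then s*² = λ*; in particular the largest non-unit singular value of the product of two orthogonal projections is the square root of the modulus of its largest non-unit eigenvalue. -/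
/-- The orthogonal projection onto a subspace `K` of the finite-dimensional complex
inner product space `H`, viewed as an operator `H →L[ℂ] H`. -/
noncomputable def proj {H : Type*} [NormedAddCommGroup H] [InnerProductSpace ℂ H]
    [FiniteDimensional ℂ H] (K : Submodule ℂ H) : H →L[ℂ] H :=
  K.subtypeL ∘L K.orthogonalProjection

section aux
open ContinuousLinearMap
variable {H : Type*} [NormedAddCommGroup H] [InnerProductSpace ℂ H] [FiniteDimensional ℂ H]

local notation "⟪" x ", " y "⟫" => @inner ℂ _ _ x y

lemma proj_mem (K : Submodule ℂ H) (x : H) : proj K x ∈ K := (K.orthogonalProjectionOnto x).2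

lemma proj_eq_self {K : Submodule ℂ H} {x : H} (hx : x ∈ K) : proj K x = x :=
  Submodule.starProjection_eq_self_iff.mpr hx

lemma norm_proj_le (K : Submodule ℂ H) (x : H) : ‖proj K x‖ ≤ ‖x‖ := by
  have h := Submodule.norm_sq_eq_add_norm_sq_projection x K
  have hc : ‖(Kᗮ.orthogonalProjectionOnto x : H)‖ = ‖Kᗮ.orthogonalProjectionOnto x‖ := rfl
  have hK : ‖(K.orthogonalProjectionOnto x : H)‖ = ‖K.orthogonalProjectionOnto x‖ := rfl
  rw [← hc, ← hK] at h
  have hpx : ‖proj K x‖ = ‖(K.orthogonalProjectionOnto x : H)‖ := rfl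
  rw [hpx]
  nlinarith [norm_nonneg ((K.orthogonalProjectionOnto x : H)), norm_nonneg x,
    sq_nonneg ‖(Kᗮ.orthogonalProjectionOnto x : H)‖, h]

lemma proj_eq_of_norm_eq {K : Submodule ℂ H} {x : H} (h : ‖proj K x‖ = ‖x‖) :
    proj K x = x := by
  have hp := Submodule.norm_sq_eq_add_norm_sq_projection x K
  have h1 : ‖proj K x‖ = ‖K.orthogonalProjectionOnto x‖ := rfl
  have h2 : ‖(Kᗮ.orthogonalProjectionOnto x : H)‖ ^ 2 = 0 := by
    have hx : ‖(K.orthogonalProjectionOnto x : H)‖ = ‖x‖ := h1 ▸ h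
    have hc : ‖(Kᗮ.orthogonalProjectionOnto x : H)‖ = ‖Kᗮ.orthogonalProjectionOnto x‖ := rfl
    have hK : ‖(K.orthogonalProjectionOnto x : H)‖ = ‖K.orthogonalProjectionOnto x‖ := rfl
    rw [← hc, ← hK] at hp
    have hx2 : ‖(K.orthogonalProjectionOnto x : H)‖ ^ 2 = ‖x‖ ^ 2 := by rw [hx]
    linarith [hp, hx2]
  have h3 : (Kᗮ.orthogonalProjectionOnto x : H) = 0 := by
    have := pow_eq_zero_iff (n := 2) (by norm_num) |>.mp h2
    exact norm_eq_zero.mp this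
  have h4 := Submodule.starProjection_add_starProjection_orthogonal (K := K) x
  have h5 : proj K x + (Kᗮ.orthogonalProjectionOnto x : H) = x := h4
  rw [h3, add_zero] at h5
  exact h5

lemma inner_proj (K : Submodule ℂ H) (x y : H) : ⟪proj K x, y⟫ = ⟪x, proj K y⟫ :=
  Submodule.inner_starProjection_left_eq_right K x y

lemma adjoint_proj (K : Submodule ℂ H) : ContinuousLinearMap.adjoint (proj K) = proj K :=
  (isSelfAdjoint_starProjection K)

lemma proj_proj (K : Submodule ℂ H) (x : H) : proj K (proj K x) = proj K x :=
  proj_eq_self (proj_mem K x)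

end aux

set_option maxHeartbeats 2000000 in
/-- For the product `T = P₂ ∘ P₁` of two orthogonal projections with
`X₁ ∩ X₂ ≠ H`, the subleading singular value
`s⋆ = sup {‖T v‖ : v ∈ (X₁ ∩ X₂)ᗮ, ‖v‖ = 1}` and the largest modulus
`λ⋆ = sup {|λ| : λ ≠ 1 an eigenvalue of T}` satisfy `s⋆² = λ⋆`. -/
theorem statement4 {H : Type*} [NormedAddCommGroup H] [InnerProductSpace ℂ H]
    [FiniteDimensional ℂ H]
    (X₁ X₂ : Submodule ℂ H) (hne : X₁ ⊓ X₂ ≠ ⊤)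
    (T : H →L[ℂ] H) (hT : T = proj X₂ ∘L proj X₁)
    (sstar : ℝ)
    (hsstar : sstar = sSup {r : ℝ | ∃ v ∈ (X₁ ⊓ X₂)ᗮ, ‖v‖ = 1 ∧ r = ‖T v‖})
    (lamstar : ℝ)
    (hlamstar : lamstar = sSup {r : ℝ | ∃ lam : ℂ, lam ≠ 1 ∧
      (∃ v : H, v ≠ 0 ∧ T v = lam • v) ∧ r = ‖lam‖}) :
    sstar ^ 2 = lamstar := by
  set Z := X₁ ⊓ X₂ with hZ
  have hTapp : ∀ v : H, T v = proj X₂ (proj X₁ v) := by intro v; rw [hT]; rfl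
  have hTz : ∀ z ∈ Z, T z = z := by
    intro z hz; rw [hTapp, proj_eq_self hz.1, proj_eq_self hz.2]
  have hTadj : ContinuousLinearMap.adjoint T = proj X₁ ∘L proj X₂ := by
    rw [hT, ContinuousLinearMap.adjoint_comp, adjoint_proj, adjoint_proj]
  have hTadjapp : ∀ v : H, ContinuousLinearMap.adjoint T v = proj X₁ (proj X₂ v) := by
    intro v; rw [hTadj]; rfl
  have hT'z : ∀ z ∈ Z, ContinuousLinearMap.adjoint T z = z := by
    intro z hz; rw [hTadjapp, proj_eq_self hz.2, proj_eq_self hz.1]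
  have hTnorm : ∀ v : H, ‖T v‖ ≤ ‖v‖ := by
    intro v; rw [hTapp]
    exact le_trans (norm_proj_le _ _) (norm_proj_le _ _)
  have hfix : ∀ v : H, ‖T v‖ = ‖v‖ → T v = v ∧ v ∈ Z := by
    intro v hv
    have h1 : ‖proj X₁ v‖ = ‖v‖ := le_antisymm (norm_proj_le _ _) (by
      calc ‖v‖ = ‖T v‖ := hv.symm
        _ = ‖proj X₂ (proj X₁ v)‖ := by rw [hTapp]
        _ ≤ ‖proj X₁ v‖ := norm_proj_le _ _)
    have h2 : proj X₁ v = v := proj_eq_of_norm_eq h1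
    have h3 : T v = proj X₂ v := by rw [hTapp, h2]
    have h4 : ‖proj X₂ v‖ = ‖v‖ := by rw [← h3, hv]
    have h5 : proj X₂ v = v := proj_eq_of_norm_eq h4
    refine ⟨by rw [h3, h5], ?_, ?_⟩
    · rw [← h2]; exact proj_mem _ _
    · rw [← h5]; exact proj_mem _ _
  have hTorth : ∀ v ∈ Zᗮ, T v ∈ Zᗮ := by
    intro v hv
    rw [Submodule.mem_orthogonal]
    intro z hz
    have h1 := ContinuousLinearMap.adjoint_inner_left T v z
    rw [hT'z z hz] at h1
    rw [← h1]
    exact (Submodule.mem_orthogonal Z v).mp hv z hz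
  have hT'orth : ∀ v ∈ Zᗮ, ContinuousLinearMap.adjoint T v ∈ Zᗮ := by
    intro v hv
    rw [Submodule.mem_orthogonal]
    intro z hz
    have h1 := ContinuousLinearMap.adjoint_inner_right T z v
    rw [hTz z hz] at h1
    rw [h1]
    exact (Submodule.mem_orthogonal Z v).mp hv z hz
  have hZbot : Zᗮ ≠ ⊥ := fun h => hne (Submodule.orthogonal_eq_bot_iff.mp h)
  obtain ⟨x₀, hx₀mem, hx₀ne⟩ := Submodule.exists_mem_ne_zero_of_ne_bot hZbot
  have hx₀n : ‖x₀‖ ≠ 0 := norm_ne_zero_iff.mpr hx₀ne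
  set e : H := ((‖x₀‖ : ℂ))⁻¹ • x₀ with he_def
  have heZ : e ∈ Zᗮ := Submodule.smul_mem _ _ hx₀mem
  have he1 : ‖e‖ = 1 := by
    rw [he_def, norm_smul, norm_inv, Complex.norm_real, Real.norm_eq_abs,
      abs_of_nonneg (norm_nonneg _), inv_mul_cancel₀ hx₀n]
  have hbdd : BddAbove {r : ℝ | ∃ v ∈ Zᗮ, ‖v‖ = 1 ∧ r = ‖T v‖} := by
    refine ⟨1, ?_⟩
    rintro r ⟨v, hv, hv1, rfl⟩
    calc ‖T v‖ ≤ ‖v‖ := hTnorm v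
      _ = 1 := hv1
  have hs0 : 0 ≤ sstar := by
    rw [hsstar]
    exact le_trans (norm_nonneg (T e)) (le_csSup hbdd ⟨e, heZ, he1, rfl⟩)
  have hsle : ∀ v ∈ Zᗮ, ‖T v‖ ≤ sstar * ‖v‖ := by
    intro v hv
    rcases eq_or_ne v 0 with rfl | hv0
    · simp
    · have hn : ‖v‖ ≠ 0 := norm_ne_zero_iff.mpr hv0
      have hnpos : (0:ℝ) < ‖v‖ := lt_of_le_of_ne (norm_nonneg v) (Ne.symm hn)
      have hu : ‖T (((‖v‖ : ℂ))⁻¹ • v)‖ ≤ sstar := by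
        rw [hsstar]
        refine le_csSup hbdd ⟨((‖v‖ : ℂ))⁻¹ • v, Submodule.smul_mem _ _ hv, ?_, rfl⟩
        rw [norm_smul, norm_inv, Complex.norm_real, Real.norm_eq_abs,
          abs_of_nonneg (norm_nonneg _), inv_mul_cancel₀ hn]
      rw [map_smul, norm_smul, norm_inv, Complex.norm_real, Real.norm_eq_abs,
        abs_of_nonneg (norm_nonneg _)] at hu
      rw [mul_comm]
      calc ‖T v‖ = ‖v‖ * (‖v‖⁻¹ * ‖T v‖) := by field_simp
        _ ≤ ‖v‖ * sstar := by
            exact mul_le_mul_of_nonneg_left hu (norm_nonneg v)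
  have hlbdd : BddAbove {r : ℝ | ∃ lam : ℂ, lam ≠ 1 ∧
      (∃ v : H, v ≠ 0 ∧ T v = lam • v) ∧ r = ‖lam‖} := by
    refine ⟨1, ?_⟩
    rintro r ⟨lam, hlam1, ⟨v, hv0, hTv⟩, rfl⟩
    have hn : (0:ℝ) < ‖v‖ := norm_pos_iff.mpr hv0
    have : ‖lam‖ * ‖v‖ ≤ 1 * ‖v‖ := by
      rw [← norm_smul, ← hTv, one_mul]
      exact hTnorm v
    exact le_of_mul_le_mul_right (by linarith) hn
  have dirA : lamstar ≤ sstar ^ 2 := by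
    rw [hlamstar]
    apply Real.sSup_le _ (sq_nonneg sstar)
    rintro r ⟨lam, hlam1, ⟨v, hv0, hTv⟩, rfl⟩
    rcases eq_or_ne lam 0 with rfl | hlam0
    · simpa using sq_nonneg sstar
    have hvZ : v ∈ Zᗮ := by
      rw [Submodule.mem_orthogonal]
      intro z hz
      have h1 := ContinuousLinearMap.adjoint_inner_left T v z
      rw [hT'z z hz, hTv, inner_smul_right] at h1
      have h2 : (lam - 1) * (inner ℂ z v : ℂ) = 0 := by ring_nf; linear_combination -h1
      rcases mul_eq_zero.mp h2 with h3 | h3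
      · exact absurd (sub_eq_zero.mp h3) hlam1
      · exact h3
    have hvX2 : v ∈ X₂ := by
      have hmem : T v ∈ X₂ := by rw [hTapp]; exact proj_mem X₂ _
      have hveq : v = lam⁻¹ • T v := by
        rw [hTv, smul_smul, inv_mul_cancel₀ hlam0, one_smul]
      rw [hveq]
      exact Submodule.smul_mem _ _ hmem
    set w : H := ContinuousLinearMap.adjoint T v with hw_def
    have hwZ : w ∈ Zᗮ := hT'orth v hvZ
    have hTvne : T v ≠ 0 := by
      rw [hTv]; exact smul_ne_zero hlam0 hv0
    have hw0 : w ≠ 0 := by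
      intro h
      have h1 : (inner ℂ v (ContinuousLinearMap.adjoint T (T v)) : ℂ) = inner ℂ (T v) (T v) :=
        ContinuousLinearMap.adjoint_inner_right T v (T v)
      rw [hTv, map_smul, ← hw_def, h, smul_zero, inner_zero_right] at h1
      exact (smul_ne_zero hlam0 hv0 : lam • v ≠ 0) (inner_self_eq_zero.mp h1.symm)
    have hwn : ‖w‖ ≠ 0 := norm_ne_zero_iff.mpr hw0
    have hwP1 : w = proj X₁ v := by rw [hw_def, hTadjapp, proj_eq_self hvX2]
    have hTw : T w = T v := by rw [hwP1, hTapp, hTapp, proj_proj]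
    have hSw : ContinuousLinearMap.adjoint T (T w) = lam • w := by
      rw [hTw, hTv, map_smul]
    have hinner : lam * ((‖w‖ : ℂ))^2 = ((‖T w‖ : ℂ))^2 := by
      have h1 : (inner ℂ w (ContinuousLinearMap.adjoint T (T w)) : ℂ) = inner ℂ (T w) (T w) :=
        ContinuousLinearMap.adjoint_inner_right T w (T w)
      rw [hSw, inner_smul_right, inner_self_eq_norm_sq_to_K, inner_self_eq_norm_sq_to_K] at h1
      exact h1
    have hlamval : lam = ((‖T w‖^2 / ‖w‖^2 : ℝ) : ℂ) := by
      have h2 : ((‖w‖ : ℂ))^2 ≠ 0 := by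
        simpa using hwn
      push_cast
      rw [eq_div_iff h2]
      linear_combination hinner
    have hnormlam : ‖lam‖ = ‖T w‖^2 / ‖w‖^2 := by
      rw [hlamval, Complex.norm_real, Real.norm_eq_abs]
      exact abs_of_nonneg (div_nonneg (sq_nonneg _) (sq_nonneg _))
    rw [hnormlam]
    have h3 : ‖T w‖ ≤ sstar * ‖w‖ := hsle w hwZ
    have hwpos : (0:ℝ) < ‖w‖ := lt_of_le_of_ne (norm_nonneg w) (Ne.symm hwn)
    rw [div_le_iff₀ (by positivity)]
    nlinarith [norm_nonneg (T w)]
  have dirB : sstar ^ 2 ≤ lamstar := by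
    haveI : Nontrivial ↥Zᗮ := Submodule.nontrivial_iff_ne_bot.mpr hZbot
    have hsphne : (Metric.sphere (0 : ↥Zᗮ) 1).Nonempty :=
      NormedSpace.sphere_nonempty.mpr zero_le_one
    have hcomp : IsCompact (Metric.sphere (0 : ↥Zᗮ) 1) := isCompact_sphere 0 1
    have hcont : Continuous (fun v : ↥Zᗮ => ‖T (v : H)‖) :=
      (T.continuous.comp continuous_subtype_val).norm
    obtain ⟨v₀, hv₀s, hmax⟩ := hcomp.exists_isMaxOn hsphne hcont.continuousOn
    have hv₀1 : ‖v₀‖ = 1 := mem_sphere_zero_iff_norm.mp hv₀s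
    have hv₀1' : ‖(v₀ : H)‖ = 1 := hv₀1
    have hv₀ne : v₀ ≠ 0 := by
      intro h; rw [h] at hv₀1; simp at hv₀1
    have hseq : sstar = ‖T (v₀ : H)‖ := by
      apply le_antisymm
      · rw [hsstar]
        apply Real.sSup_le _ (norm_nonneg _)
        rintro r ⟨v, hv, hv1, rfl⟩
        have : (⟨v, hv⟩ : ↥Zᗮ) ∈ Metric.sphere (0 : ↥Zᗮ) 1 :=
          mem_sphere_zero_iff_norm.mpr hv1
        exact hmax this
      · rw [hsstar]
        exact le_csSup hbdd ⟨(v₀ : H), v₀.2, hv₀1', rfl⟩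
    rcases eq_or_lt_of_le hs0 with hs0' | hspos
    · -- sstar = 0
      have hTe : T e = 0 := by
        have h := hsle e heZ
        rw [← hs0', zero_mul] at h
        exact norm_le_zero_iff.mp h
      have hmem : (0:ℝ) ∈ {r : ℝ | ∃ lam : ℂ, lam ≠ 1 ∧
          (∃ v : H, v ≠ 0 ∧ T v = lam • v) ∧ r = ‖lam‖} := by
        refine ⟨0, by norm_num, ⟨e, ?_, by simp [hTe]⟩, by simp⟩
        intro h; rw [h] at he1; simp at he1
      rw [← hs0', hlamstar]
      simpa using le_csSup hlbdd hmem
    · -- sstar > 0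
      set B : ↥Zᗮ →L[ℂ] ↥Zᗮ :=
        Zᗮ.orthogonalProjectionOnto ∘L ((ContinuousLinearMap.adjoint T ∘L T) ∘L Zᗮ.subtypeL)
        with hB_def
      have hBcoe : ∀ u : ↥Zᗮ, ((B u : H)) = ContinuousLinearMap.adjoint T (T (u : H)) := by
        intro u
        show ((Zᗮ.orthogonalProjectionOnto (ContinuousLinearMap.adjoint T (T (u:H))) : H)) = _
        exact Submodule.starProjection_eq_self_iff.mpr (hT'orth _ (hTorth _ u.2))
      have hBinner : ∀ u w : ↥Zᗮ, (inner ℂ (B u) w : ℂ) = inner ℂ (T (u:H)) (T (w:H)) := by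
        intro u w
        have h0 : (inner ℂ (B u) w : ℂ) = inner ℂ ((B u : H)) ((w : H)) :=
          Submodule.coe_inner _ _ _
        rw [h0, hBcoe]
        exact ContinuousLinearMap.adjoint_inner_left T (w : H) (T (u:H))
      have hBsym : IsSelfAdjoint B := by
        rw [ContinuousLinearMap.isSelfAdjoint_iff_isSymmetric]
        intro u w
        show (inner ℂ (B u) w : ℂ) = inner ℂ u (B w)
        rw [hBinner u w]
        have h1 : (inner ℂ u (B w) : ℂ) = inner ℂ ((u:H)) ((B w : H)) :=
          Submodule.coe_inner _ _ _
        rw [h1, hBcoe]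
        exact (ContinuousLinearMap.adjoint_inner_right T (u:H) (T (w:H))).symm
      have hre : ∀ u : ↥Zᗮ, B.reApplyInnerSelf u = ‖T (u:H)‖^2 := by
        intro u
        rw [ContinuousLinearMap.reApplyInnerSelf_apply, hBinner u u,
          inner_self_eq_norm_sq_to_K]
        rw [← RCLike.ofReal_pow, RCLike.ofReal_re]
      have hmax' : IsMaxOn B.reApplyInnerSelf (Metric.sphere (0:↥Zᗮ) ‖v₀‖) v₀ := by
        rw [hv₀1]
        intro x hx
        simp only [Set.mem_setOf_eq, hre]
        have := hmax hx
        exact pow_le_pow_left₀ (norm_nonneg _) this 2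
      have heig := hBsym.eq_smul_self_of_isLocalExtrOn (Or.inr hmax'.localize)
      have hray : B.rayleighQuotient v₀ = sstar^2 := by
        rw [ContinuousLinearMap.rayleighQuotient, hre, hv₀1, hseq]
        norm_num
      rw [hray] at heig
      have hSv₀ : ContinuousLinearMap.adjoint T (T (v₀:H)) = ((sstar^2 : ℝ) : ℂ) • (v₀:H) := by
        rw [← hBcoe, heig]
        rfl
      obtain ⟨u, hu_def⟩ : ∃ u : H, u = T (v₀ : H) := ⟨_, rfl⟩
      have hu_norm : ‖u‖ = sstar := by rw [hu_def]; exact hseq.symm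
      have hu0 : u ≠ 0 := by
        intro h; rw [h] at hu_norm; simp at hu_norm
        exact absurd hu_norm.symm (ne_of_gt hspos)
      have hkey : ∀ x : H, T (ContinuousLinearMap.adjoint T (T x)) = T (T x) := by
        intro x
        simp only [hTapp, hTadjapp, proj_proj]
      have hTu : T u = ((sstar^2 : ℝ) : ℂ) • u := by
        rw [hu_def, ← hkey (v₀:H), hSv₀, map_smul]
      have hlamne : ((sstar^2 : ℝ) : ℂ) ≠ 1 := by
        intro h
        have h1 : (sstar^2 : ℝ) = 1 := by exact_mod_cast h
        have h2 : sstar = 1 := by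
          have h2' : (sstar - 1) * (sstar + 1) = 0 := by linear_combination h1
          rcases mul_eq_zero.mp h2' with h' | h'
          · linarith
          · linarith
        have h3 : ‖T (v₀:H)‖ = ‖(v₀:H)‖ := by rw [← hseq, h2, hv₀1']
        obtain ⟨-, hv₀Z⟩ := hfix _ h3
        have h4 : (inner ℂ (v₀:H) (v₀:H) : ℂ) = 0 :=
          (Submodule.mem_orthogonal Z (v₀:H)).mp v₀.2 (v₀:H) hv₀Z
        have h5 : (v₀ : H) = 0 := inner_self_eq_zero.mp h4
        rw [h5] at hv₀1'; simp at hv₀1'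
      have hmem : sstar^2 ∈ {r : ℝ | ∃ lam : ℂ, lam ≠ 1 ∧
          (∃ v : H, v ≠ 0 ∧ T v = lam • v) ∧ r = ‖lam‖} := by
        refine ⟨((sstar^2 : ℝ) : ℂ), hlamne, ⟨u, hu0, hTu⟩, ?_⟩
        rw [Complex.norm_real, Real.norm_eq_abs, abs_of_nonneg (sq_nonneg _)]
      rw [hlamstar]
      exact le_csSup hlbdd hmem
  linarith
end

section
/- Let X ⊆ H be a subspace with orthogonal projection Q, let P be a finite product of orthogonal projections onto subspaces of H, and let Z = {v ∈ H : P(Q v) = v} be the fixed-point space of P ∘ Q. Let R be the orthogonal projection onto a subspace W ⊆ H with Z ⊆ W. Then: (i) the fixed-point space of R ∘ P ∘ Q equals Z; and (ii) sup{‖R(P(Q v))‖ : v ∈ X ∩ Zᗮ, ‖v‖ = 1} ≤ sup{‖P(Q v)‖ : v ∈ X ∩ Zᗮ, ‖v‖ = 1}, i.e., the subleading singular value does not increase when the extra projection R is appended. -/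
lemma proj_apply_norm_le {H : Type*} [NormedAddCommGroup H] [InnerProductSpace ℂ H]
    [FiniteDimensional ℂ H] (K : Submodule ℂ H) (v : H) : ‖proj K v‖ ≤ ‖v‖ := by
  have h : ‖proj K v‖ = ‖K.orthogonalProjection v‖ := rfl
  rw [h]
  calc ‖K.orthogonalProjection v‖ ≤ ‖K.orthogonalProjection‖ * ‖v‖ :=
        (K.orthogonalProjection).le_opNorm v
    _ ≤ 1 * ‖v‖ := by
        exact mul_le_mul_of_nonneg_right (Submodule.orthogonalProjectionOnto_norm_le K) (norm_nonneg v)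
    _ = ‖v‖ := one_mul _

lemma proj_eq_self_of_norm_eq {H : Type*} [NormedAddCommGroup H] [InnerProductSpace ℂ H]
    [FiniteDimensional ℂ H] (K : Submodule ℂ H) (v : H) (h : ‖proj K v‖ = ‖v‖) :
    proj K v = v := by
  have hpyth := Submodule.norm_sq_eq_add_norm_sq_projection v K
  have h1 : ‖proj K v‖ = ‖K.orthogonalProjection v‖ := rfl
  have h2 : ‖Kᗮ.orthogonalProjection v‖ ^ 2 = 0 := by
    have hv : ‖v‖ ^ 2 = ‖v‖ ^ 2 + ‖Kᗮ.orthogonalProjection v‖ ^ 2 := by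
      conv_lhs => rw [hpyth, ← h1, h]
    linarith
  have h3 : (Kᗮ.orthogonalProjection v : H) = 0 := by
    have := pow_eq_zero_iff (n := 2) (by norm_num) |>.mp h2
    exact Submodule.coe_eq_zero.mpr (norm_eq_zero.mp this)
  have h4 : (K.orthogonalProjection v : H) + (Kᗮ.orthogonalProjection v : H) = v :=
    Submodule.starProjection_add_starProjection_orthogonal (K := K) v
  rw [h3, add_zero] at h4
  exact h4

lemma list_prod_apply_norm_le {H : Type*} [NormedAddCommGroup H] [InnerProductSpace ℂ H]
    (l : List (H →L[ℂ] H)) (hl : ∀ f ∈ l, ∀ v : H, ‖f v‖ ≤ ‖v‖) (v : H) :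
    ‖l.prod v‖ ≤ ‖v‖ := by
  induction l generalizing v with
  | nil => simp [List.prod_nil]
  | cons a t ih =>
    have : (a :: t).prod v = a (t.prod v) := by
      rw [List.prod_cons]; rfl
    rw [this]
    calc ‖a (t.prod v)‖ ≤ ‖t.prod v‖ := hl a (List.mem_cons_self (a := a) (l := t)) _
      _ ≤ ‖v‖ := ih (fun f hf => hl f (List.mem_cons_of_mem a hf)) v

/-- Let `Q` be the orthogonal projection onto a subspace `X`, let `P`
be a finite product of orthogonal projections, and let `Z` be the fixed-point space of
`P ∘ Q`.  Let `R` be the orthogonal projection onto a subspace `W ⊇ Z`.  Then the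
fixed-point space of `R ∘ P ∘ Q` equals `Z`, and the subleading singular value restricted
to `X` does not increase when `R` is appended:
`sup {‖R(P(Q v))‖ : v ∈ X ∩ Zᗮ, ‖v‖ = 1} ≤ sup {‖P(Q v)‖ : v ∈ X ∩ Zᗮ, ‖v‖ = 1}`. -/
theorem statement14 {H : Type*} [NormedAddCommGroup H] [InnerProductSpace ℂ H]
    [FiniteDimensional ℂ H]
    (X : Submodule ℂ H) (Q : H →L[ℂ] H) (hQ : Q = proj X)
    (P : H →L[ℂ] H)
    (hP : ∃ (n : ℕ) (Xs : Fin n → Submodule ℂ H),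
      P = (List.ofFn fun i => proj (Xs i)).reverse.prod)
    (Z : Submodule ℂ H) (hZ : ∀ v : H, v ∈ Z ↔ P (Q v) = v)
    (W : Submodule ℂ H) (hZW : Z ≤ W)
    (R : H →L[ℂ] H) (hR : R = proj W) :
    (∀ v : H, R (P (Q v)) = v ↔ v ∈ Z) ∧
    sSup {r : ℝ | ∃ v ∈ X ⊓ Zᗮ, ‖v‖ = 1 ∧ r = ‖R (P (Q v))‖} ≤
      sSup {r : ℝ | ∃ v ∈ X ⊓ Zᗮ, ‖v‖ = 1 ∧ r = ‖P (Q v)‖} := by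
  -- P is norm nonincreasing
  have hPle : ∀ v : H, ‖P v‖ ≤ ‖v‖ := by
    obtain ⟨n, Xs, rfl⟩ := hP
    intro v
    apply list_prod_apply_norm_le
    intro f hf w
    rw [List.mem_reverse, List.mem_ofFn] at hf
    obtain ⟨i, rfl⟩ := hf
    exact proj_apply_norm_le _ w
  have hQle : ∀ v : H, ‖Q v‖ ≤ ‖v‖ := fun v => hQ ▸ proj_apply_norm_le X v
  have hRle : ∀ v : H, ‖R v‖ ≤ ‖v‖ := fun v => hR ▸ proj_apply_norm_le W v
  constructor
  · intro v
    constructor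
    · intro hv
      rw [hZ]
      -- norm chain
      have c1 : ‖v‖ = ‖R (P (Q v))‖ := by rw [hv]
      have c2 : ‖R (P (Q v))‖ ≤ ‖P (Q v)‖ := hRle _
      have c3 : ‖P (Q v)‖ ≤ ‖Q v‖ := hPle _
      have c4 : ‖Q v‖ ≤ ‖v‖ := hQle _
      have hnorm : ‖R (P (Q v))‖ = ‖P (Q v)‖ := le_antisymm c2 (by linarith)
      have : R (P (Q v)) = P (Q v) := by
        rw [hR] at hnorm ⊢
        exact proj_eq_self_of_norm_eq W _ hnorm
      rw [← this, hv]
    · intro hv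
      have h1 : P (Q v) = v := (hZ v).mp hv
      rw [h1]
      have : v ∈ W := hZW hv
      rw [hR]
      exact Submodule.starProjection_eq_self_iff.mpr this
  · set S1 := {r : ℝ | ∃ v ∈ X ⊓ Zᗮ, ‖v‖ = 1 ∧ r = ‖R (P (Q v))‖}
    set S2 := {r : ℝ | ∃ v ∈ X ⊓ Zᗮ, ‖v‖ = 1 ∧ r = ‖P (Q v)‖}
    have hbdd : BddAbove S2 := by
      refine ⟨1, ?_⟩
      rintro r ⟨v, _, hv1, rfl⟩
      calc ‖P (Q v)‖ ≤ ‖Q v‖ := hPle _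
        _ ≤ ‖v‖ := hQle _
        _ = 1 := hv1
    rcases Set.eq_empty_or_nonempty S1 with he | hne
    · rw [he, Real.sSup_empty]
      rcases Set.eq_empty_or_nonempty S2 with he2 | hne2
      · rw [he2, Real.sSup_empty]
      · obtain ⟨r, v, _, _, rfl⟩ := hne2
        exact le_trans (norm_nonneg _) (le_csSup hbdd ⟨v, ‹_›, ‹_›, rfl⟩)
    · apply csSup_le hne
      rintro r ⟨v, hv, hv1, rfl⟩
      calc ‖R (P (Q v))‖ ≤ ‖P (Q v)‖ := hRle _
        _ ≤ sSup S2 := le_csSup hbdd ⟨v, hv, hv1, rfl⟩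
end
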